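/- arXiv:2008.13168 — 3 statements merged into one kernel-verified Lean document; each statement's English description precedes it below -/
import Mathlib

section
/- Let h : [0,∞) → [0,∞) be defined by h(r) = μ ∫₁^r β(ρ) dρ, where μ > 0, β : [0,∞) → [0,1] is smooth (or continuous), β = 0 on [0,1], β = 1 on [1+δ,∞), β is nondecreasing, and 0 < δ ≤ ε/μ. Then for all r ≥ 0 one has r·h'(r) − h(r) − ε ≤ h'(r) ≤ r·h'(r) − h(r). -/
/-- For `h(r) = μ ∫₁^r β(ρ) dρ` with `μ > 0`, `β : ℝ → [0,1]` continuous,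
`β = 0` on `(-∞,1]`, `β = 1` on `[1+δ,∞)`, `β` nondecreasing, and `0 < δ ≤ ε/μ`,
one has `r·h'(r) − h(r) − ε ≤ h'(r) ≤ r·h'(r) − h(r)` for all `r ≥ 0`,
where `h'(r) = μ·β(r)`. -/
theorem stmt_0 (μ ε δ : ℝ) (hμ : 0 < μ) (hδ0 : 0 < δ) (hδε : δ ≤ ε / μ)
    (β : ℝ → ℝ) (hβc : Continuous β)
    (hβ0 : ∀ r ≤ (1 : ℝ), β r = 0) (hβ1 : ∀ r, 1 + δ ≤ r → β r = 1)
    (hβrange : ∀ r, β r ∈ Set.Icc (0 : ℝ) 1) (hβmono : Monotone β)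
    (h h' : ℝ → ℝ)
    (hh : ∀ r, h r = μ * ∫ t in (1:ℝ)..r, β t)
    (hh' : ∀ r, h' r = μ * β r) :
    ∀ r, 0 ≤ r → r * h' r - h r - ε ≤ h' r ∧ h' r ≤ r * h' r - h r := by
  intro r hr
  rw [hh, hh']
  have hεμ : μ * δ ≤ ε := by
    rw [← le_div_iff₀' hμ]; exact hδε
  set I := ∫ t in (1:ℝ)..r, β t with hI
  -- reduce to inequalities about β r + I vs r * β r and ε/μ
  suffices hkey : I ≤ (r - 1) * β r ∧ (r - 1) * β r - I ≤ δ by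
    obtain ⟨h1, h2⟩ := hkey
    constructor
    · nlinarith [hμ.le]
    · nlinarith [hμ.le]
  rcases le_or_gt r 1 with hr1 | hr1
  · -- r ≤ 1 : β r = 0 and I = 0
    have hβr : β r = 0 := hβ0 r hr1
    have hI0 : I = 0 := by
      rw [hI, intervalIntegral.integral_symm]
      have hz : (∫ t in r..(1:ℝ), β t) = ∫ _ in r..(1:ℝ), (0:ℝ) := by
        apply intervalIntegral.integral_congr
        intro t ht
        rw [Set.uIcc_of_le hr1] at ht
        exact hβ0 t ht.2
      rw [hz]; simp
    rw [hI0, hβr]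
    constructor <;> nlinarith
  · -- 1 ≤ r
    have hr1' : (1:ℝ) ≤ r := hr1.le
    have hint : ∀ a b : ℝ, IntervalIntegrable β MeasureTheory.volume a b :=
      fun a b => hβc.intervalIntegrable a b
    constructor
    · -- I ≤ (r-1) * β r
      have : I ≤ ∫ _ in (1:ℝ)..r, β r := by
        apply intervalIntegral.integral_mono_on hr1' (hint 1 r)
          (intervalIntegrable_const)
        intro t ht
        exact hβmono ht.2
      simpa [mul_comm] using this
    · -- (r-1) * β r - I ≤ δ
      have hIpos : 0 ≤ I := by
        apply intervalIntegral.integral_nonneg hr1'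
        intro t _; exact (hβrange t).1
      have hβub : β r ≤ 1 := (hβrange r).2
      have hβlb : 0 ≤ β r := (hβrange r).1
      rcases le_or_gt r (1 + δ) with hrd | hrd
      · nlinarith
      · -- r > 1+δ : I ≥ r - 1 - δ
        have hsplit : I = (∫ t in (1:ℝ)..(1+δ), β t) + ∫ t in (1+δ)..r, β t := by
          rw [hI, ← intervalIntegral.integral_add_adjacent_intervals (hint 1 (1+δ)) (hint (1+δ) r)]
        have h1d : (0:ℝ) ≤ ∫ t in (1:ℝ)..(1+δ), β t := by
          apply intervalIntegral.integral_nonneg (by linarith)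
          intro t _; exact (hβrange t).1
        have h2d : (∫ t in (1+δ)..r, β t) = r - (1+δ) := by
          have : (∫ t in (1+δ)..r, β t) = ∫ _ in (1+δ)..r, (1:ℝ) := by
            apply intervalIntegral.integral_congr
            intro t ht
            rw [Set.uIcc_of_le hrd.le] at ht
            exact hβ1 t ht.1
          rw [this]; simp
        nlinarith
end

section
/- Let Λ(A,U) be the free graded-commutative algebra over a field on generators A of degree −3 and U of degree 2 (so A² = 0 and Λ(A,U) has basis {Uᵏ, AUᵏ : k ≥ 0}). Suppose λ : Λ(A,U) → Λ(A,U) ⊗ Λ(A,U) is a degree −5 linear map satisfying the Sullivan relation λ(a·b) = (1⊗μ)(λ(a)⊗b) + (μ⊗1)(a⊗λ(b)) for all a,b (where μ is the multiplication, in Sweedler notation λ(ab) = a₁⊗(a₂b) + (ab₁)⊗b₂), together with λ(1) = 0, λ(A) = 0, and λ(U) = A⊗1 + 1⊗A. Then for all k ≥ 0: λ(Uᵏ) = Σ_{i+j=k−1, i,j≥0} (AUⁱ⊗Uʲ + Uⁱ⊗AUʲ) and λ(AUᵏ) = Σ_{i+j=k−1, i,j≥0} AUⁱ⊗AUʲ.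 -/
open TensorProduct

/-!
Since `R` is commutative, so is `R ⊗ R`, and Sullivan's relation says that `λ` is a derivation
`R → R ⊗ R` for the two module structures given by multiplication with `x ⊗ 1` and `1 ⊗ y`:
`λ(xy) = (1 ⊗ y) λ(x) + (x ⊗ 1) λ(y)`. Iterating gives
`λ(xᵏ) = Σ_{i+j=k-1} (xⁱ ⊗ xʲ) λ(x)`, which for `x = U` is the first formula; the second follows
from `λ(A) = 0` and `A² = 0`.
-/

namespace TensorProduct

variable {K R : Type*} [CommSemiring K] [CommSemiring R] [Algebra K R]

theorem map_id_mulRight_eq_mul (y : R) (t : R ⊗[K] R) :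
    map LinearMap.id (LinearMap.mulRight K y) t = (1 ⊗ₜ[K] y) * t := by
  induction t using TensorProduct.induction_on with
  | zero => simp
  | tmul a b => simp [Algebra.TensorProduct.tmul_mul_tmul, mul_comm]
  | add s t hs ht => simp [hs, ht, mul_add]

theorem map_mulLeft_id_eq_mul (x : R) (t : R ⊗[K] R) :
    map (LinearMap.mulLeft K x) LinearMap.id t = (x ⊗ₜ[K] 1) * t := by
  induction t using TensorProduct.induction_on with
  | zero => simp
  | tmul a b => simp [Algebra.TensorProduct.tmul_mul_tmul]
  | add s t hs ht => simp [hs, ht, mul_add]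

end TensorProduct

section Sullivan

variable {K R : Type*} [CommSemiring K] [CommRing R] [Algebra K R]

def SatisfiesSullivanRelation (lam : R →ₗ[K] R ⊗[K] R) : Prop :=
  ∀ x y : R, lam (x * y)
    = map LinearMap.id (LinearMap.mulRight K y) (lam x)
      + map (LinearMap.mulLeft K x) LinearMap.id (lam y)

namespace SatisfiesSullivanRelation

variable {lam : R →ₗ[K] R ⊗[K] R}

theorem map_mul (h : SatisfiesSullivanRelation lam) (x y : R) :
    lam (x * y) = (1 ⊗ₜ[K] y) * lam x + (x ⊗ₜ[K] 1) * lam y := by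
  rw [h, map_id_mulRight_eq_mul, map_mulLeft_id_eq_mul]

theorem map_one (h : SatisfiesSullivanRelation lam) : lam 1 = 0 := by
  have h1 := h.map_mul 1 1
  rwa [mul_one, ← Algebra.TensorProduct.one_def, one_mul, left_eq_add] at h1

theorem map_pow (h : SatisfiesSullivanRelation lam) (x : R) (k : ℕ) :
    lam (x ^ k) = ∑ i ∈ Finset.range k, ((x ^ i) ⊗ₜ[K] (x ^ (k - 1 - i))) * lam x := by
  induction k with
  | zero =>
    rw [pow_zero, h.map_one, Finset.sum_range_zero]
  | succ k ih =>
    rw [pow_succ, h.map_mul, ih, Finset.mul_sum, Finset.sum_range_succ, Nat.add_sub_cancel,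
      Nat.sub_self, pow_zero]
    congr 1
    refine Finset.sum_congr rfl fun i hi => ?_
    have hik : k - i = k - 1 - i + 1 := by
      have := Finset.mem_range.mp hi
      omega
    rw [← mul_assoc, Algebra.TensorProduct.tmul_mul_tmul, one_mul, ← pow_succ', ← hik]

end SatisfiesSullivanRelation

end Sullivan

theorem stmt_6_general {K R : Type*} [Field K] [CommRing R] [Algebra K R]
    (A U : R) (hA2 : A ^ 2 = 0)
    (lam : R →ₗ[K] R ⊗[K] R)
    (sullivan : ∀ x y : R, lam (x * y)
      = TensorProduct.map LinearMap.id (LinearMap.mulRight K y) (lam x)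
        + TensorProduct.map (LinearMap.mulLeft K x) LinearMap.id (lam y))
    (hA : lam A = 0)
    (hU : lam U = A ⊗ₜ[K] 1 + 1 ⊗ₜ[K] A) :
    ∀ k : ℕ,
      lam (U ^ k)
          = (∑ i ∈ Finset.range k, ((A * U ^ i) ⊗ₜ[K] (U ^ (k - 1 - i))))
            + (∑ i ∈ Finset.range k, ((U ^ i) ⊗ₜ[K] (A * U ^ (k - 1 - i)))) ∧
      lam (A * U ^ k)
          = ∑ i ∈ Finset.range k, (A * U ^ i) ⊗ₜ[K] (A * U ^ (k - 1 - i)) := by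
  have h : SatisfiesSullivanRelation lam := sullivan
  intro k
  have hUk : lam (U ^ k) = ∑ i ∈ Finset.range k,
      ((A * U ^ i) ⊗ₜ[K] (U ^ (k - 1 - i)) + (U ^ i) ⊗ₜ[K] (A * U ^ (k - 1 - i))) := by
    rw [h.map_pow, hU]
    refine Finset.sum_congr rfl fun i _ => ?_
    simp only [mul_add, Algebra.TensorProduct.tmul_mul_tmul, mul_one, mul_comm _ A]
  refine ⟨by rw [hUk, Finset.sum_add_distrib], ?_⟩
  rw [h.map_mul, hA, mul_zero, zero_add, hUk, Finset.mul_sum]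
  refine Finset.sum_congr rfl fun i _ => ?_
  rw [mul_add, Algebra.TensorProduct.tmul_mul_tmul, Algebra.TensorProduct.tmul_mul_tmul,
    ← mul_assoc, ← sq, hA2, zero_mul, zero_tmul, zero_add, one_mul]

/-- Corollary 2.3: Let `Λ(A,U)` be the free graded-commutative algebra over a
field on generators `A` (degree −3, so `A² = 0`) and `U` (degree 2), with basis
`{Uᵏ, AUᵏ : k ≥ 0}`; since `A` is odd and `U` even, the algebra is commutative.
If `λ` satisfies Sullivan's relation `λ(ab) = a₁⊗(a₂b) + (ab₁)⊗b₂` together with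
`λ(1) = 0`, `λ(A) = 0`, `λ(U) = A⊗1 + 1⊗A`, then for all `k ≥ 0`:
`λ(Uᵏ) = Σ_{i+j=k−1} (AUⁱ⊗Uʲ + Uⁱ⊗AUʲ)` and `λ(AUᵏ) = Σ_{i+j=k−1} AUⁱ⊗AUʲ`. -/
theorem stmt_6 {K R : Type*} [Field K] [CommRing R] [Algebra K R]
    (A U : R) (hA2 : A ^ 2 = 0)
    (b : Module.Basis (ℕ ⊕ ℕ) K R)
    (hb1 : ∀ k : ℕ, b (Sum.inl k) = U ^ k)
    (hb2 : ∀ k : ℕ, b (Sum.inr k) = A * U ^ k)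
    (lam : R →ₗ[K] R ⊗[K] R)
    (sullivan : ∀ x y : R, lam (x * y)
      = TensorProduct.map LinearMap.id (LinearMap.mulRight K y) (lam x)
        + TensorProduct.map (LinearMap.mulLeft K x) LinearMap.id (lam y))
    (h1 : lam 1 = 0) (hA : lam A = 0)
    (hU : lam U = A ⊗ₜ[K] 1 + 1 ⊗ₜ[K] A) :
    ∀ k : ℕ,
      lam (U ^ k)
          = (∑ i ∈ Finset.range k, ((A * U ^ i) ⊗ₜ[K] (U ^ (k - 1 - i))))
            + (∑ i ∈ Finset.range k, ((U ^ i) ⊗ₜ[K] (A * U ^ (k - 1 - i)))) ∧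
      lam (A * U ^ k)
          = ∑ i ∈ Finset.range k, (A * U ^ i) ⊗ₜ[K] (A * U ^ (k - 1 - i)) :=
  stmt_6_general A U hA2 lam sullivan hA hU
end

section
/- Consider the operator D : ξ ↦ ∂_s ξ + i ∂_t ξ acting on maps ξ : [0,R] × ℝ/ℤ → ℂⁿ with totally real boundary conditions ξ(0,·), ξ(R,·) ∈ iℝⁿ. Then the kernel of D consists exactly of the constant maps with values in iℝⁿ; in particular dim ker D = n. -/
open Set Complex

namespace Stmt9Aux

lemma per_int (f : ℂ → ℂ) (hper : ∀ z, f (z + Complex.I) = f z) :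
    ∀ (k : ℤ) (z : ℂ), f (z + k * Complex.I) = f z := by
  intro k
  induction k using Int.induction_on with
  | zero => simp
  | succ k ih =>
    intro z
    have h1 : z + ((k : ℤ) + 1 : ℤ) * Complex.I = (z + (k : ℤ) * Complex.I) + Complex.I := by
      push_cast; ring
    rw [h1, hper, ih]
  | pred k ih =>
    intro z
    have h1 : z + (-(k : ℤ) - 1 : ℤ) * Complex.I + Complex.I = z + (-(k : ℤ) : ℤ) * Complex.I := by
      push_cast; ring
    have := hper (z + (-(k : ℤ) - 1 : ℤ) * Complex.I)
    rw [h1] at this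
    rw [← this, ih]


/-- reduce any point of the closed strip to the fundamental domain -/
lemma reduce (f : ℂ → ℂ) (hper : ∀ z, f (z + Complex.I) = f z) (z : ℂ) :
    f z = f ((z.re : ℂ) + (Int.fract z.im : ℝ) * Complex.I) ∧
      (Int.fract z.im) ∈ Set.Icc (0:ℝ) 1 := by
  constructor
  · have hzw : z = ((z.re : ℂ) + (Int.fract z.im : ℝ) * Complex.I) + (⌊z.im⌋ : ℤ) * Complex.I := by
      apply Complex.ext <;> simp [Int.fract_add_floor]
    conv_lhs => rw [hzw]
    rw [per_int f hper]
  · exact ⟨Int.fract_nonneg _, (Int.fract_lt_one _).le⟩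


lemma re_nonpos (R : ℝ) (hR : 0 < R) (f : ℂ → ℂ)
    (hcont : Continuous f)
    (hdiff : ∀ z : ℂ, z.re ∈ Set.Ioo 0 R → DifferentiableAt ℂ f z)
    (hper : ∀ z, f (z + Complex.I) = f z)
    (hb : ∀ z : ℂ, z.re = 0 ∨ z.re = R → (f z).re = 0) :
    ∀ z : ℂ, z.re ∈ Set.Icc 0 R → (f z).re ≤ 0 := by
  -- fundamental domain
  set K : Set ℂ := (fun p : ℝ × ℝ => (p.1 : ℂ) + (p.2 : ℂ) * Complex.I) ''
      ((Set.Icc 0 R) ×ˢ (Set.Icc (0:ℝ) 1)) with hK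
  have hKmem : ∀ w : ℂ, w ∈ K ↔ w.re ∈ Set.Icc 0 R ∧ w.im ∈ Set.Icc (0:ℝ) 1 := by
    intro w
    constructor
    · rintro ⟨⟨a, b⟩, hab, rfl⟩
      simpa [Set.mem_prod, -Set.Icc_prod_Icc] using hab
    · rintro ⟨h1, h2⟩
      exact ⟨(w.re, w.im), Set.mem_prod.2 ⟨h1, h2⟩, by simp⟩
  have hKc : IsCompact K :=
    ((isCompact_Icc.prod isCompact_Icc)).image (by fun_prop)
  have hKne : K.Nonempty := ⟨0, (hKmem 0).2 (by simp [hR.le])⟩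
  obtain ⟨z₀, hz₀K, hz₀⟩ := hKc.exists_isMaxOn hKne ((Complex.continuous_re.comp hcont).continuousOn)
  -- key : max over the whole strip
  have key : ∀ z : ℂ, z.re ∈ Set.Icc 0 R → (f z).re ≤ (f z₀).re := by
    intro z hz
    obtain ⟨h1, h2⟩ := reduce f hper z
    rw [h1]
    refine hz₀ ((hKmem _).2 ?_)
    constructor <;> simp [hz.1, hz.2, h2.1, h2.2]
  have hz₀re : z₀.re ∈ Set.Icc 0 R := ((hKmem z₀).1 hz₀K).1
  -- goal reduces to (f z₀).re ≤ 0
  suffices hfin : (f z₀).re ≤ 0 by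
    intro z hz; exact (key z hz).trans hfin
  rcases eq_or_lt_of_le hz₀re.1 with h0 | h0
  · exact le_of_eq (hb z₀ (Or.inl h0.symm))
  rcases eq_or_lt_of_le hz₀re.2 with hRe | hRe
  · exact le_of_eq (hb z₀ (Or.inr hRe))
  -- interior case: maximum modulus principle for exp ∘ f
  set U : Set ℂ := Complex.re ⁻¹' Set.Ioo 0 R with hU
  have hUo : IsOpen U := isOpen_Ioo.preimage Complex.continuous_re
  have hUc : Convex ℝ U := (convex_Ioo (0:ℝ) R).linear_preimage Complex.reLm
  have hz₀U : z₀ ∈ U := ⟨h0, hRe⟩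
  set g : ℂ → ℂ := fun z => Complex.exp (f z) with hg
  have hgd : DifferentiableOn ℂ g U := fun z hz =>
    ((hdiff z hz).cexp).differentiableWithinAt
  have hmax : IsMaxOn (norm ∘ g) U z₀ := by
    intro z hz
    simp only [Function.comp, hg, Complex.norm_exp, Set.mem_setOf_eq]
    exact Real.exp_le_exp.2 (key z ⟨hz.1.le, hz.2.le⟩)
  have heq := Complex.norm_eqOn_of_isPreconnected_of_isMaxOn hUc.isPreconnected hUo hgd hz₀U hmax
  -- transfer the constant value to the boundary point 0 via a horizontal line
  have hline : Set.EqOn (fun x : ℝ => ‖g (x : ℂ)‖) (fun _ => ‖g z₀‖) (Set.Icc 0 R) := by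
    have h1 : Set.EqOn (fun x : ℝ => ‖g (x : ℂ)‖) (fun _ => ‖g z₀‖) (Set.Ioo 0 R) := by
      intro x hx
      exact heq (by simpa [hU] using hx)
    have := h1.closure (by fun_prop) continuous_const
    rwa [closure_Ioo hR.ne] at this
  have h00 : ‖g (0:ℂ)‖ = ‖g z₀‖ := by
    simpa using hline (Set.left_mem_Icc.2 hR.le)
  have hg0 : ‖g (0:ℂ)‖ = 1 := by
    simp [hg, Complex.norm_exp, hb 0 (Or.inl rfl)]
  have : Real.exp ((f z₀).re) = 1 := by
    rw [← Complex.norm_exp, ← h00, hg0]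
  exact le_of_eq ((Real.exp_eq_one_iff _).1 this)

lemma strip_const (R : ℝ) (hR : 0 < R) (f : ℂ → ℂ)
    (hcont : Continuous f)
    (hdiff : ∀ z : ℂ, z.re ∈ Set.Ioo 0 R → DifferentiableAt ℂ f z)
    (hre : ∀ z : ℂ, z.re ∈ Set.Icc 0 R → (f z).re = 0) :
    ∀ z : ℂ, z.re ∈ Set.Icc 0 R → f z = f 0 := by
  set U : Set ℂ := Complex.re ⁻¹' Set.Ioo 0 R with hU
  have hUo : IsOpen U := isOpen_Ioo.preimage Complex.continuous_re
  have hUc : Convex ℝ U := (convex_Ioo (0:ℝ) R).linear_preimage Complex.reLm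
  -- derivative vanishes on U
  have hderiv0 : ∀ z ∈ U, HasDerivAt f 0 z := by
    intro z hz
    have hd := (hdiff z hz).hasDerivAt
    set c := deriv f z with hc
    have hF : HasFDerivAt f
        ((ContinuousLinearMap.smulRight (1 : ℂ →L[ℂ] ℂ) c).restrictScalars ℝ) z :=
      hd.hasFDerivAt.restrictScalars ℝ
    have hRe : HasFDerivAt (fun w => (f w).re)
        (Complex.reCLM.comp
          ((ContinuousLinearMap.smulRight (1 : ℂ →L[ℂ] ℂ) c).restrictScalars ℝ)) z :=
      (Complex.reCLM.hasFDerivAt).comp z hF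
    have h0 : HasFDerivAt (fun w => (f w).re) (0 : ℂ →L[ℝ] ℝ) z := by
      have hev : (fun w => (f w).re) =ᶠ[nhds z] (fun _ => (0:ℝ)) := by
        filter_upwards [hUo.mem_nhds hz] with w hw
        exact hre w ⟨hw.1.le, hw.2.le⟩
      exact (hasFDerivAt_const (0:ℝ) z).congr_of_eventuallyEq hev
    have huniq := hRe.unique h0
    have h1 : ((1:ℂ) • c).re = 0 := by
      have := congrArg (fun L : ℂ →L[ℝ] ℝ => L 1) huniq
      simpa using this
    have h2 : (Complex.I • c).re = 0 := by
      have := congrArg (fun L : ℂ →L[ℝ] ℝ => L Complex.I) huniq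
      simpa using this
    have hc0 : c = 0 := by
      apply Complex.ext
      · simpa using h1
      · have : (Complex.I * c).re = 0 := by simpa [smul_eq_mul] using h2
        simpa [Complex.mul_re] using this
    rw [← hc0]
    exact hd
  -- constant on U by the mean value inequality
  have hdOn : DifferentiableOn ℝ f U := fun z hz =>
    ((hdiff z hz).restrictScalars ℝ).differentiableWithinAt
  have hconstU : ∀ x ∈ U, ∀ y ∈ U, f x = f y := by
    intro x hx y hy
    have hbound : ∀ z ∈ U, ‖fderivWithin ℝ f U z‖ ≤ 0 := by
      intro z hz
      have : fderivWithin ℝ f U z = 0 := by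
        rw [fderivWithin_of_isOpen hUo hz]
        have := ((hderiv0 z hz).hasFDerivAt.restrictScalars ℝ).fderiv
        rw [this]
        ext w
        simp
      simp [this]
    have := hUc.norm_image_sub_le_of_norm_fderivWithin_le hdOn hbound hy hx
    have h0 : ‖f x - f y‖ ≤ 0 := by simpa using this
    exact sub_eq_zero.1 (norm_le_zero_iff.1 h0)
  -- extend to the closed strip via horizontal lines
  have hmid : ((R/2 : ℝ) : ℂ) ∈ U := by
    constructor <;> simp <;> linarith
  have hext : ∀ z : ℂ, z.re ∈ Set.Icc 0 R → f z = f ((R/2 : ℝ) : ℂ) := by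
    intro z hz
    have hline : Set.EqOn (fun x : ℝ => f ((x : ℂ) + (z.im : ℂ) * Complex.I))
        (fun _ => f ((R/2 : ℝ) : ℂ)) (Set.Icc 0 R) := by
      have h1 : Set.EqOn (fun x : ℝ => f ((x : ℂ) + (z.im : ℂ) * Complex.I))
          (fun _ => f ((R/2 : ℝ) : ℂ)) (Set.Ioo 0 R) := by
        intro x hx
        exact hconstU _ (show ((x:ℂ) + (z.im:ℂ)*Complex.I).re ∈ Set.Ioo 0 R by simpa using hx) _ hmid
      have := h1.closure (by fun_prop) continuous_const
      rwa [closure_Ioo hR.ne] at this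
    have := hline hz
    simpa [Complex.re_add_im] using this
  intro z hz
  rw [hext z hz, ← hext 0 (by simp [hR.le])]

lemma coord_diff (n : ℕ) (R : ℝ) (hR : 0 < R)
    (ξ : ℝ × ℝ → EuclideanSpace ℂ (Fin n))
    (hsmooth : ContDiff ℝ (⊤ : ℕ∞) ξ)
    (hCR : ∀ p : ℝ × ℝ, p.1 ∈ Set.Icc 0 R →
      fderiv ℝ ξ p (1, 0) + Complex.I • fderiv ℝ ξ p (0, 1) = 0)
    (i : Fin n) (z : ℂ) (hz : z.re ∈ Set.Ioo 0 R) :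
    DifferentiableAt ℂ (fun w : ℂ => ξ (w.re, w.im) i) z := by
  set p : ℝ × ℝ := (z.re, z.im) with hp
  set L0 := fderiv ℝ ξ p with hL0
  have hξd : HasFDerivAt ξ L0 p := (hsmooth.differentiable (by simp) p).hasFDerivAt
  have hφ : HasFDerivAt (fun w : ℂ => (w.re, w.im))
      (Complex.equivRealProdCLM : ℂ →L[ℝ] ℝ × ℝ) z := by
    have := Complex.equivRealProdCLM.hasFDerivAt (x := z)
    exact this
  have hcomp : HasFDerivAt (fun w : ℂ => ξ (w.re, w.im) i)
      (((EuclideanSpace.proj i).restrictScalars ℝ).comp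
        (L0.comp (Complex.equivRealProdCLM : ℂ →L[ℝ] ℝ × ℝ))) z := by
    have h1 : HasFDerivAt (fun w : ℂ => ξ (w.re, w.im))
        (L0.comp (Complex.equivRealProdCLM : ℂ →L[ℝ] ℝ × ℝ)) z := hξd.comp z hφ
    exact (((EuclideanSpace.proj i).restrictScalars ℝ).hasFDerivAt).comp z h1
  set c : ℂ := L0 (1, 0) i with hc
  have hCRi : L0 (0, 1) i = Complex.I * c := by
    have h := hCR p ⟨hz.1.le, hz.2.le⟩
    have h2 := congrFun (congrArg (fun v : EuclideanSpace ℂ (Fin n) => (v : Fin n → ℂ)) h) i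
    simp only [PiLp.add_apply, PiLp.smul_apply, smul_eq_mul, PiLp.zero_apply] at h2
    -- h2 : L0 (1,0) i + I * L0 (0,1) i = 0
    have := congrArg (fun w => Complex.I * w) h2
    simp only [mul_add, ← mul_assoc, Complex.I_mul_I, mul_zero] at this
    rw [hc]
    linear_combination -this
  have hEq : (((EuclideanSpace.proj i).restrictScalars ℝ).comp
        (L0.comp (Complex.equivRealProdCLM : ℂ →L[ℝ] ℝ × ℝ)))
      = (ContinuousLinearMap.smulRight (1 : ℂ →L[ℂ] ℂ) c).restrictScalars ℝ := by
    ext w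
    have e1 : (((EuclideanSpace.proj i).restrictScalars ℝ).comp
        (L0.comp (Complex.equivRealProdCLM : ℂ →L[ℝ] ℝ × ℝ))) w = L0 (w.re, w.im) i := rfl
    have e2 : ((ContinuousLinearMap.smulRight (1 : ℂ →L[ℂ] ℂ) c).restrictScalars ℝ) w
        = w * c := rfl
    rw [e1, e2]
    have hsplit : ((w.re, w.im) : ℝ × ℝ) = w.re • ((1:ℝ), (0:ℝ)) + w.im • ((0:ℝ), (1:ℝ)) := by
      simp [Prod.ext_iff]
    rw [hsplit, map_add, map_smul, map_smul]
    simp only [PiLp.add_apply, PiLp.smul_apply, smul_eq_mul]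
    rw [hCRi, ← hc]
    simp only [Complex.real_smul]
    conv_rhs => rw [show (w : ℂ) = (w.re : ℂ) + (w.im : ℂ) * Complex.I
      from (Complex.re_add_im w).symm]
    ring
  rw [hEq] at hcomp
  exact (hasFDerivAt_of_restrictScalars ℝ
    (f' := ContinuousLinearMap.smulRight (1 : ℂ →L[ℂ] ℂ) c) hcomp rfl).differentiableAt

end Stmt9Aux

/-- The kernel of the Cauchy–Riemann operator `D : ξ ↦ ∂_s ξ + i ∂_t ξ` on
maps `ξ : [0,R] × ℝ/ℤ → ℂⁿ` with totally real boundary conditions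
`ξ(0,·), ξ(R,·) ∈ iℝⁿ` consists exactly of the constant maps with values in `iℝⁿ`
(so `dim ker D = n`): every smooth `t`-periodic solution with these boundary conditions
is constant, with value in `iℝⁿ` (and conversely such constants obviously solve the
equation). -/
theorem stmt_9 (n : ℕ) (R : ℝ) (hR : 0 < R)
    (ξ : ℝ × ℝ → EuclideanSpace ℂ (Fin n))
    (hsmooth : ContDiff ℝ (⊤ : ℕ∞) ξ)
    (hper : ∀ s t : ℝ, ξ (s, t + 1) = ξ (s, t))
    (hCR : ∀ p : ℝ × ℝ, p.1 ∈ Set.Icc 0 R →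
      fderiv ℝ ξ p (1, 0) + Complex.I • fderiv ℝ ξ p (0, 1) = 0)
    (hbdy0 : ∀ t : ℝ, ∀ i, (ξ (0, t) i).re = 0)
    (hbdyR : ∀ t : ℝ, ∀ i, (ξ (R, t) i).re = 0) :
    (∀ s ∈ Set.Icc (0 : ℝ) R, ∀ t : ℝ, ξ (s, t) = ξ (0, 0)) ∧
      (∀ i, (ξ (0, 0) i).re = 0) := by
  classical
  have key : ∀ i : Fin n, ∀ z : ℂ, z.re ∈ Set.Icc 0 R →
      ξ (z.re, z.im) i = ξ (0, 0) i := by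
    intro i
    set f : ℂ → ℂ := fun w => ξ (w.re, w.im) i with hf
    have hcont : Continuous f := by
      have h1 : Continuous fun w : ℂ => ξ (w.re, w.im) :=
        hsmooth.continuous.comp (Complex.continuous_re.prodMk Complex.continuous_im)
      exact ((EuclideanSpace.proj i).continuous).comp h1
    have hdiff : ∀ z : ℂ, z.re ∈ Set.Ioo 0 R → DifferentiableAt ℂ f z := fun z hz =>
      Stmt9Aux.coord_diff n R hR ξ hsmooth hCR i z hz
    have hperf : ∀ z : ℂ, f (z + Complex.I) = f z := by
      intro z
      show ξ ((z + Complex.I).re, (z + Complex.I).im) i = ξ (z.re, z.im) i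
      simp [Complex.add_re, Complex.add_im, hper z.re z.im]
    have hb : ∀ z : ℂ, z.re = 0 ∨ z.re = R → (f z).re = 0 := by
      rintro z (h | h) <;> rw [hf] <;> simp only [h] <;>
        [exact hbdy0 z.im i; exact hbdyR z.im i]
    have h1 := Stmt9Aux.re_nonpos R hR f hcont hdiff hperf hb
    have h2 := Stmt9Aux.re_nonpos R hR (fun z => -f z) hcont.neg
      (fun z hz => (hdiff z hz).neg) (fun z => by simp [hperf z])
      (fun z hz => by simp [hb z hz])
    have hre : ∀ z : ℂ, z.re ∈ Set.Icc 0 R → (f z).re = 0 := by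
      intro z hz
      have := h2 z hz
      simp only [Complex.neg_re, neg_nonpos] at this
      exact le_antisymm (h1 z hz) this
    have hconst := Stmt9Aux.strip_const R hR f hcont hdiff hre
    intro z hz
    have h3 := hconst z hz
    have h4 : f 0 = ξ (0, 0) i := by
      show ξ ((0:ℂ).re, (0:ℂ).im) i = ξ (0, 0) i
      simp
    rw [← h4, ← h3]
  constructor
  · intro s hs t
    refine PiLp.ext fun i => ?_
    have := key i ((s : ℂ) + (t : ℂ) * Complex.I) (by simpa using hs)
    simpa using this
  · intro i
    exact hbdy0 0 i
end
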